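/- Assume in addition that the characters α_1, …, α_n are pairwise distinct. Let a ∈ V and suppose s ∈ T satisfies s a = a. Then ⟨a, f_k⟩ = 0 for every k with α_k(s) = −1, and consequently dim φ_a(V) ≤ n − |{k : α_k(s) = −1}|. (This is the abstract form of the paper's Theorem 3.4: if the supersingular elliptic curve E_i is defined over the prime field F_N, so that T_N fixes [i], then n − dim Θ_i is at least the number ρ of normalized Hecke eigenforms whose Atkin–Lehner sign is +1.) -/

import Mathlib

open scoped RealInnerProductSpace

/-- The linear map `φ_a : V → T*` given by `φ_a(x)(t) = ⟪a, t x⟫`, where `T` is a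
subalgebra of the endomorphism algebra of a real inner product space `V`. -/
noncomputable def phi {V : Type*} [NormedAddCommGroup V] [InnerProductSpace ℝ V]
    (T : Subalgebra ℝ (V →ₗ[ℝ] V)) (a : V) : V →ₗ[ℝ] Module.Dual ℝ T where
  toFun x :=
    { toFun := fun t => ⟪a, (t : V →ₗ[ℝ] V) x⟫
      map_add' := fun s t => by simp [inner_add_right]
      map_smul' := fun c t => by simp [inner_smul_right] }
  map_add' x y := by ext t; simp [inner_add_right]
  map_smul' c x := by ext t; simp [inner_smul_right]

/-!
Since `s` is symmetric, its eigenspaces for the eigenvalues `1` and `-1` are orthogonal, so `a`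
is orthogonal to every `f k` with `α k s = -1`. Expanding `x` in the eigenbasis gives
`φ_a(x) = ∑ k, ⟪f k, x⟫ ⟪a, f k⟫ • α k`, so the image of `φ_a` is spanned by the characters
`α k` with `⟪a, f k⟫ ≠ 0`, of which there are at most `n - |{k | α k s = -1}|`.
-/

section

variable {V : Type*} [NormedAddCommGroup V] [InnerProductSpace ℝ V]
  (T : Subalgebra ℝ (V →ₗ[ℝ] V)) {ι : Type*} [Fintype ι] (f : OrthonormalBasis ι ℝ V)
  (α : ι → Module.Dual ℝ T)

theorem phi_apply_eq_sum (heig : ∀ (t : T) (k : ι), (t : V →ₗ[ℝ] V) (f k) = α k t • f k)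
    (a x : V) : phi T a x = ∑ k, (⟪f k, x⟫ * ⟪a, f k⟫) • α k := by
  ext t
  have hexpand : (t : V →ₗ[ℝ] V) x = ∑ k, ⟪f k, x⟫ • (t : V →ₗ[ℝ] V) (f k) := by
    conv_lhs => rw [← f.sum_repr' x]
    simp only [map_sum, map_smul]
  simp only [phi, LinearMap.coe_mk, AddHom.coe_mk, hexpand, inner_sum,
    LinearMap.sum_apply, LinearMap.smul_apply, smul_eq_mul, heig, real_inner_smul_right]
  exact Finset.sum_congr rfl fun k _ => by ring

theorem range_phi_le_span (heig : ∀ (t : T) (k : ι), (t : V →ₗ[ℝ] V) (f k) = α k t • f k)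
    (a : V) : LinearMap.range (phi T a) ≤ Submodule.span ℝ (α '' {k | ⟪a, f k⟫ ≠ 0}) := by
  rintro _ ⟨x, rfl⟩
  rw [phi_apply_eq_sum T f α heig]
  refine Submodule.sum_mem _ fun k _ => ?_
  by_cases hk : ⟪a, f k⟫ = 0
  · simp [hk]
  · exact Submodule.smul_mem _ _ (Submodule.subset_span ⟨k, hk, rfl⟩)

theorem finrank_range_phi_le (heig : ∀ (t : T) (k : ι), (t : V →ₗ[ℝ] V) (f k) = α k t • f k)
    (a : V) : Module.finrank ℝ (LinearMap.range (phi T a)) ≤ {k | ⟪a, f k⟫ ≠ 0}.ncard := by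
  classical
  have := Module.Finite.span_of_finite ℝ (Set.toFinite (α '' {k | ⟪a, f k⟫ ≠ 0}))
  calc Module.finrank ℝ (LinearMap.range (phi T a))
      ≤ Module.finrank ℝ (Submodule.span ℝ (α '' {k | ⟪a, f k⟫ ≠ 0})) :=
        Submodule.finrank_mono (range_phi_le_span T f α heig a)
    _ ≤ (α '' {k | ⟪a, f k⟫ ≠ 0}).ncard := by
        rw [Set.ncard_eq_toFinset_card']; exact finrank_span_le_card _
    _ ≤ {k | ⟪a, f k⟫ ≠ 0}.ncard := Set.ncard_image_le

end

theorem stmt8_general {V : Type*} [NormedAddCommGroup V] [InnerProductSpace ℝ V]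
    (T : Subalgebra ℝ (V →ₗ[ℝ] V))
    (hsym : ∀ t ∈ T, ∀ x y : V, ⟪t x, y⟫ = ⟪x, t y⟫)
    {n : ℕ} (f : OrthonormalBasis (Fin n) ℝ V)
    (α : Fin n → Module.Dual ℝ T)
    (heig : ∀ (t : T) (k : Fin n), (t : V →ₗ[ℝ] V) (f k) = α k t • f k)
    (a : V) (s : T) (hs : (s : V →ₗ[ℝ] V) a = a) :
    (∀ k : Fin n, α k s = -1 → ⟪a, f k⟫ = 0) ∧
    Module.finrank ℝ (LinearMap.range (phi T a)) ≤ n - {k : Fin n | α k s = -1}.ncard := by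
  have horth : ∀ k, α k s = -1 → ⟪a, f k⟫ = 0 := fun k hk => by
    have ha : a ∈ Module.End.eigenspace (s : V →ₗ[ℝ] V) 1 :=
      Module.End.mem_eigenspace_iff.2 (by rw [hs, one_smul])
    have hfk : f k ∈ Module.End.eigenspace (s : V →ₗ[ℝ] V) (-1) :=
      Module.End.mem_eigenspace_iff.2 (by rw [heig, hk])
    simpa using LinearMap.IsSymmetric.orthogonalFamily_eigenspaces (hsym s s.2)
      (by norm_num : (1 : ℝ) ≠ -1) ⟨a, ha⟩ ⟨f k, hfk⟩
  refine ⟨horth, ?_⟩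
  calc Module.finrank ℝ (LinearMap.range (phi T a))
      ≤ {k | ⟪a, f k⟫ ≠ 0}.ncard := finrank_range_phi_le T f α heig a
    _ ≤ {k | α k s = -1}ᶜ.ncard := Set.ncard_le_ncard fun k hk hk' => hk (horth k hk')
    _ = n - {k : Fin n | α k s = -1}.ncard := by rw [Set.ncard_compl, Nat.card_fin]

/-- abstract form of Theorem 3.4. Assume the characters `α 1, …, α n` are
pairwise distinct. If `s ∈ T` fixes `a`, then `⟪a, f_k⟫ = 0` for every `k` with
`α_k(s) = −1`, and `dim φ_a(V) ≤ n − |{k : α_k(s) = −1}|`. -/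
theorem stmt8 {V : Type*} [NormedAddCommGroup V] [InnerProductSpace ℝ V]
    [FiniteDimensional ℝ V]
    (T : Subalgebra ℝ (V →ₗ[ℝ] V))
    (hcomm : ∀ s t : T, s * t = t * s)
    (hsym : ∀ t ∈ T, ∀ x y : V, ⟪t x, y⟫ = ⟪x, t y⟫)
    {n : ℕ} (f : OrthonormalBasis (Fin n) ℝ V)
    (α : Fin n → Module.Dual ℝ T)
    (heig : ∀ (t : T) (k : Fin n), (t : V →ₗ[ℝ] V) (f k) = α k t • f k)
    (hdist : Function.Injective α)
    (a : V) (s : T) (hs : (s : V →ₗ[ℝ] V) a = a) :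
    (∀ k : Fin n, α k s = -1 → ⟪a, f k⟫ = 0) ∧
    Module.finrank ℝ (LinearMap.range (phi T a)) ≤ n - {k : Fin n | α k s = -1}.ncard :=
  stmt8_general T hsym f α heig a s hs
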